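/- arXiv:2412.18372 — 2 statements merged into one kernel-verified Lean document; each statement's English description precedes it below -/
import Mathlib

section
/- If [A,‖·‖_A] is an injective normed operator ideal, then the composition ideal [A∘H_v^∞, ‖·‖_{A∘H_v^∞}] is an injective normed weighted holomorphic ideal. -/
open scoped ENNReal
open Set

noncomputable section

universe u v w

/-- A bundled complex Banach space. -/
structure BanachSp : Type (u + 1) where
  α : Type u
  [grp : NormedAddCommGroup α]
  [mod : NormedSpace ℂ α]
  [cpl : CompleteSpace α]

attribute [instance] BanachSp.grp BanachSp.mod BanachSp.cpl

instance : CoeSort BanachSp (Type u) := ⟨BanachSp.α⟩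

section Defs

variable {E : Type u} {F : Type v} [NormedAddCommGroup E] [NormedSpace ℂ E]
  [NormedAddCommGroup F] [NormedSpace ℂ F]

/-- `v` is a weight on `U`: continuous and strictly positive there. -/
def IsWeight (U : Set E) (v : E → ℝ) : Prop :=
  ContinuousOn v U ∧ ∀ x ∈ U, 0 < v x

/-- `f` belongs to `H_v^∞(U, F)`: holomorphic on `U` with `sup_{x ∈ U} v x * ‖f x‖ < ∞`. -/
def HvBdd (U : Set E) (v : E → ℝ) (f : E → F) : Prop :=
  DifferentiableOn ℂ f U ∧ BddAbove ((fun x => v x * ‖f x‖) '' U)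

/-- The weighted supremum norm `‖f‖_v = sup_{x ∈ U} v x * ‖f x‖`. -/
def hvNorm (U : Set E) (v : E → ℝ) (f : E → F) : ℝ :=
  sSup ((fun x => v x * ‖f x‖) '' U)

end Defs

section Iota

variable (F : Type u) [NormedAddCommGroup F] [NormedSpace ℂ F]

/-- The closed unit ball of the dual space `F*`. -/
def BallDual : Type u := {φ : StrongDual ℂ F // ‖φ‖ ≤ 1}

instance : Nonempty (BallDual F) := ⟨⟨0, by simp⟩⟩

/-- `ℓ∞(B_{F*})`, the space of bounded scalar functions on the closed unit ball of `F*`. -/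
abbrev Linf : Type u := lp (fun _ : BallDual F => ℂ) ∞

/-- The canonical embedding `ι_F : F → ℓ∞(B_{F*})`, `⟨ι_F y, φ⟩ = φ y`. -/
def iotaFun (y : F) : Linf F :=
  ⟨fun φ => φ.1 y, memℓp_infty ⟨‖y‖, by
    rintro r ⟨φ, rfl⟩
    calc ‖φ.1 y‖ ≤ ‖φ.1‖ * ‖y‖ := φ.1.le_opNorm y
      _ ≤ 1 * ‖y‖ := by
          have := φ.2
          exact mul_le_mul_of_nonneg_right this (norm_nonneg y)
      _ = ‖y‖ := one_mul _⟩⟩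

/-- The canonical embedding `ι_F : F → ℓ∞(B_{F*})` as a continuous linear map. -/
def iota : F →L[ℂ] Linf F :=
  LinearMap.mkContinuous
    { toFun := iotaFun F
      map_add' := by
        intro y z
        apply lp.ext
        rw [lp.coeFn_add]
        funext φ
        show φ.1 (y + z) = φ.1 y + φ.1 z
        exact map_add φ.1 y z
      map_smul' := by
        intro c y
        apply lp.ext
        rw [lp.coeFn_smul]
        funext φ
        show φ.1 (c • y) = c • φ.1 y
        exact map_smul φ.1 c y }
    1 (by
      intro y
      rw [one_mul]
      refine lp.norm_le_of_forall_le (norm_nonneg y) fun φ => ?_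
      calc ‖φ.1 y‖ ≤ ‖φ.1‖ * ‖y‖ := φ.1.le_opNorm y
        _ ≤ 1 * ‖y‖ := mul_le_mul_of_nonneg_right φ.2 (norm_nonneg y)
        _ = ‖y‖ := one_mul _)

/-- `ℓ∞(B_{F*})` as a bundled Banach space. -/
def LinfSp : BanachSp.{u} := ⟨Linf F⟩

end Iota

/-- An assignment of a class of weighted holomorphic mappings, together with a
"norm" function, to every component `(U, v, F)`. -/
structure WHAssignment : Type (u + 1) where
  mem : ∀ (E : BanachSp.{u}) (U : Set E) (v : E → ℝ) (F : BanachSp.{u}), (E → F) → Prop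
  nrm : ∀ (E : BanachSp.{u}) (U : Set E) (v : E → ℝ) (F : BanachSp.{u}), (E → F) → ℝ

/-- `[I, ‖·‖_I]` is a normed weighted holomorphic ideal. -/
structure IsNormedWHIdeal (I : WHAssignment.{u}) : Prop where
  mem_hv : ∀ (E : BanachSp.{u}) (U : Set E.α) (v : E.α → ℝ), IsOpen U → IsWeight U v →
    ∀ (F : BanachSp.{u}) (f : E.α → F.α), I.mem E U v F f → HvBdd U v f
  zero_mem : ∀ (E : BanachSp.{u}) (U : Set E.α) (v : E.α → ℝ), IsOpen U → IsWeight U v →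
    ∀ (F : BanachSp.{u}), I.mem E U v F (fun _ => 0)
  add_mem : ∀ (E : BanachSp.{u}) (U : Set E.α) (v : E.α → ℝ), IsOpen U → IsWeight U v →
    ∀ (F : BanachSp.{u}) (f g : E.α → F.α), I.mem E U v F f → I.mem E U v F g →
      I.mem E U v F (fun x => f x + g x)
  smul_mem : ∀ (E : BanachSp.{u}) (U : Set E.α) (v : E.α → ℝ), IsOpen U → IsWeight U v →
    ∀ (F : BanachSp.{u}) (c : ℂ) (f : E.α → F.α), I.mem E U v F f →
      I.mem E U v F (fun x => c • f x)
  nrm_nonneg : ∀ (E : BanachSp.{u}) (U : Set E.α) (v : E.α → ℝ), IsOpen U → IsWeight U v →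
    ∀ (F : BanachSp.{u}) (f : E.α → F.α), I.mem E U v F f → 0 ≤ I.nrm E U v F f
  nrm_eq_zero : ∀ (E : BanachSp.{u}) (U : Set E.α) (v : E.α → ℝ), IsOpen U → IsWeight U v →
    ∀ (F : BanachSp.{u}) (f : E.α → F.α), I.mem E U v F f → I.nrm E U v F f = 0 →
      ∀ x ∈ U, f x = 0
  nrm_add_le : ∀ (E : BanachSp.{u}) (U : Set E.α) (v : E.α → ℝ), IsOpen U → IsWeight U v →
    ∀ (F : BanachSp.{u}) (f g : E.α → F.α), I.mem E U v F f → I.mem E U v F g →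
      I.nrm E U v F (fun x => f x + g x) ≤ I.nrm E U v F f + I.nrm E U v F g
  nrm_smul : ∀ (E : BanachSp.{u}) (U : Set E.α) (v : E.α → ℝ), IsOpen U → IsWeight U v →
    ∀ (F : BanachSp.{u}) (c : ℂ) (f : E.α → F.α), I.mem E U v F f →
      I.nrm E U v F (fun x => c • f x) = ‖c‖ * I.nrm E U v F f
  hv_le_nrm : ∀ (E : BanachSp.{u}) (U : Set E.α) (v : E.α → ℝ), IsOpen U → IsWeight U v →
    ∀ (F : BanachSp.{u}) (f : E.α → F.α), I.mem E U v F f →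
      hvNorm U v f ≤ I.nrm E U v F f
  unit_mem : ∀ (E : BanachSp.{u}) (U : Set E.α) (v : E.α → ℝ), IsOpen U → IsWeight U v →
    ∀ (F : BanachSp.{u}) (h : E.α → ℂ), HvBdd U v h → ∀ y : F.α,
      I.mem E U v F (fun x => h x • y) ∧
        I.nrm E U v F (fun x => h x • y) = hvNorm U v h * ‖y‖
  comp_mem : ∀ (E : BanachSp.{u}) (U : Set E.α) (v : E.α → ℝ), IsOpen U → IsWeight U v →
    ∀ (V : Set E.α), IsOpen V → V ⊆ U →
    ∀ h : E.α → E.α, DifferentiableOn ℂ h V → Set.MapsTo h V U →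
    ∀ c : ℝ, 0 ≤ c → (∀ x ∈ V, v x ≤ c * v (h x)) →
    ∀ (F G : BanachSp.{u}) (T : F.α →L[ℂ] G.α) (f : E.α → F.α), I.mem E U v F f →
      I.mem E V v G (fun x => T (f (h x))) ∧
        I.nrm E V v G (fun x => T (f (h x))) ≤ ‖T‖ * I.nrm E U v F f * c

/-- `[I, ‖·‖_I]` is a Banach weighted holomorphic ideal: a normed one with complete components. -/
structure IsBanachWHIdeal (I : WHAssignment.{u}) extends IsNormedWHIdeal I : Prop where
  complete : ∀ (E : BanachSp.{u}) (U : Set E.α) (v : E.α → ℝ), IsOpen U → IsWeight U v →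
    ∀ (F : BanachSp.{u}) (f : ℕ → E.α → F.α), (∀ n, I.mem E U v F (f n)) →
      (∀ ε : ℝ, 0 < ε → ∃ N : ℕ, ∀ m ≥ N, ∀ n ≥ N,
        I.nrm E U v F (fun x => f m x - f n x) < ε) →
      ∃ g : E.α → F.α, I.mem E U v F g ∧
        ∀ ε : ℝ, 0 < ε → ∃ N : ℕ, ∀ n ≥ N, I.nrm E U v F (fun x => f n x - g x) < ε

/-- Injectivity of a normed weighted holomorphic ideal. -/
def WHInjective (I : WHAssignment.{u}) : Prop :=
  ∀ (E : BanachSp.{u}) (U : Set E.α) (v : E.α → ℝ), IsOpen U → IsWeight U v →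
  ∀ (F G : BanachSp.{u}) (f : E.α → F.α), HvBdd U v f →
  ∀ ι : F.α →ₗᵢ[ℂ] G.α, I.mem E U v G (fun x => ι (f x)) →
    I.mem E U v F f ∧ I.nrm E U v F f = I.nrm E U v G (fun x => ι (f x))

/-- The injective hull `[I^inj, ‖·‖_{I^inj}]` of a weighted holomorphic ideal. -/
def whInj (I : WHAssignment.{u}) : WHAssignment.{u} where
  mem E U v F f := HvBdd U v f ∧ I.mem E U v (LinfSp F.α) (fun x => iota F.α (f x))
  nrm E U v F f := I.nrm E U v (LinfSp F.α) (fun x => iota F.α (f x))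

/-- The order relation `[I, ‖·‖_I] ≤ [J, ‖·‖_J]` between weighted holomorphic ideals. -/
def WHle (I J : WHAssignment.{u}) : Prop :=
  ∀ (E : BanachSp.{u}) (U : Set E.α) (v : E.α → ℝ), IsOpen U → IsWeight U v →
  ∀ (F : BanachSp.{u}) (f : E.α → F.α), I.mem E U v F f →
    J.mem E U v F f ∧ J.nrm E U v F f ≤ I.nrm E U v F f

/-- The domination property: `‖Σ λᵢ v(xᵢ) f(xᵢ)‖ ≤ ‖Σ λᵢ v(xᵢ) g(xᵢ)‖` for all finite families. -/
def Dominates {E : Type u} {F : Type v} {G : Type w} [NormedAddCommGroup E] [NormedSpace ℂ E]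
    [NormedAddCommGroup F] [NormedSpace ℂ F] [NormedAddCommGroup G] [NormedSpace ℂ G]
    (U : Set E) (v : E → ℝ) (f : E → F) (g : E → G) : Prop :=
  ∀ (n : ℕ) (lam : Fin n → ℂ) (x : Fin n → E), (∀ i, x i ∈ U) →
    ‖∑ i, lam i • v (x i) • f (x i)‖ ≤ ‖∑ i, lam i • v (x i) • g (x i)‖


/-- An assignment of a class of operators and a "norm" to every pair of Banach spaces. -/
structure OpAssignment : Type (u + 1) where
  mem : ∀ (E F : BanachSp.{u}), (E.α →L[ℂ] F.α) → Prop
  nrm : ∀ (E F : BanachSp.{u}), (E.α →L[ℂ] F.α) → ℝ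

/-- `A` is an operator ideal (no norm conditions). -/
structure IsOpIdeal (A : OpAssignment.{u}) : Prop where
  zero_mem : ∀ (E F : BanachSp.{u}), A.mem E F 0
  add_mem : ∀ (E F : BanachSp.{u}) (S T : E.α →L[ℂ] F.α),
    A.mem E F S → A.mem E F T → A.mem E F (S + T)
  rank_one_mem : ∀ (E F : BanachSp.{u}) (φ : E.α →L[ℂ] ℂ) (y : F.α),
    A.mem E F (φ.smulRight y)
  comp_mem : ∀ (E₀ E F F₀ : BanachSp.{u}) (R : E₀.α →L[ℂ] E.α) (T : E.α →L[ℂ] F.α)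
    (S : F.α →L[ℂ] F₀.α), A.mem E F T → A.mem E₀ F₀ ((S.comp T).comp R)

/-- `[A, ‖·‖_A]` is a normed operator ideal in the sense of Pietsch. -/
structure IsNormedOpIdeal (A : OpAssignment.{u}) : Prop where
  zero_mem : ∀ (E F : BanachSp.{u}), A.mem E F 0
  add_mem : ∀ (E F : BanachSp.{u}) (S T : E.α →L[ℂ] F.α),
    A.mem E F S → A.mem E F T → A.mem E F (S + T)
  smul_mem : ∀ (E F : BanachSp.{u}) (c : ℂ) (T : E.α →L[ℂ] F.α),
    A.mem E F T → A.mem E F (c • T)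
  nrm_nonneg : ∀ (E F : BanachSp.{u}) (T : E.α →L[ℂ] F.α), A.mem E F T → 0 ≤ A.nrm E F T
  nrm_add_le : ∀ (E F : BanachSp.{u}) (S T : E.α →L[ℂ] F.α), A.mem E F S → A.mem E F T →
    A.nrm E F (S + T) ≤ A.nrm E F S + A.nrm E F T
  nrm_smul : ∀ (E F : BanachSp.{u}) (c : ℂ) (T : E.α →L[ℂ] F.α), A.mem E F T →
    A.nrm E F (c • T) = ‖c‖ * A.nrm E F T
  op_le_nrm : ∀ (E F : BanachSp.{u}) (T : E.α →L[ℂ] F.α), A.mem E F T → ‖T‖ ≤ A.nrm E F T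
  rank_one_mem : ∀ (E F : BanachSp.{u}) (φ : E.α →L[ℂ] ℂ) (y : F.α),
    A.mem E F (φ.smulRight y) ∧ A.nrm E F (φ.smulRight y) = ‖φ‖ * ‖y‖
  comp_mem : ∀ (E₀ E F F₀ : BanachSp.{u}) (R : E₀.α →L[ℂ] E.α) (T : E.α →L[ℂ] F.α)
    (S : F.α →L[ℂ] F₀.α), A.mem E F T → A.mem E₀ F₀ ((S.comp T).comp R) ∧
      A.nrm E₀ F₀ ((S.comp T).comp R) ≤ ‖S‖ * A.nrm E F T * ‖R‖

/-- `[A, ‖·‖_A]` is a Banach operator ideal. -/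
structure IsBanachOpIdeal (A : OpAssignment.{u}) extends IsNormedOpIdeal A : Prop where
  complete : ∀ (E F : BanachSp.{u}) (T : ℕ → (E.α →L[ℂ] F.α)), (∀ n, A.mem E F (T n)) →
    (∀ ε : ℝ, 0 < ε → ∃ N : ℕ, ∀ m ≥ N, ∀ n ≥ N, A.nrm E F (T m - T n) < ε) →
    ∃ S, A.mem E F S ∧ ∀ ε : ℝ, 0 < ε → ∃ N : ℕ, ∀ n ≥ N, A.nrm E F (T n - S) < ε

/-- Injectivity of a normed operator ideal. -/
def OpInjective (A : OpAssignment.{u}) : Prop :=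
  ∀ (E F G : BanachSp.{u}) (ι : F.α →ₗᵢ[ℂ] G.α) (T : E.α →L[ℂ] F.α),
    A.mem E G (ι.toContinuousLinearMap.comp T) →
      A.mem E F T ∧ A.nrm E F T = A.nrm E G (ι.toContinuousLinearMap.comp T)

/-- The injective hull `[A^inj, ‖·‖_{A^inj}]` of an operator ideal. -/
def opInj (A : OpAssignment.{u}) : OpAssignment.{u} where
  mem E F T := A.mem E (LinfSp F.α) ((iota F.α).comp T)
  nrm E F T := A.nrm E (LinfSp F.α) ((iota F.α).comp T)

/-- The closure `\bar{A}` of an operator ideal, under the operator norm. -/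
def opClosure (A : OpAssignment.{u}) : OpAssignment.{u} where
  mem E F T := ∀ ε : ℝ, 0 < ε → ∃ S, A.mem E F S ∧ ‖T - S‖ ≤ ε
  nrm E F T := ‖T‖

/-- The composition ideal `[A ∘ H_v^∞, ‖·‖_{A ∘ H_v^∞}]`. -/
def compWH (A : OpAssignment.{u}) : WHAssignment.{u} where
  mem E U v F f := ∃ (G : BanachSp.{u}) (T : G.α →L[ℂ] F.α) (g : E.α → G.α),
    A.mem G F T ∧ HvBdd U v g ∧ ∀ x ∈ U, f x = T (g x)
  nrm E U v F f := sInf {r | ∃ (G : BanachSp.{u}) (T : G.α →L[ℂ] F.α) (g : E.α → G.α),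
    A.mem G F T ∧ HvBdd U v g ∧ (∀ x ∈ U, f x = T (g x)) ∧ r = A.nrm G F T * hvNorm U v g}

/-- The closure of a weighted holomorphic ideal in `(H_v^∞, ‖·‖_v)`. -/
def whClosure (I : WHAssignment.{u}) : WHAssignment.{u} where
  mem E U v F f := HvBdd U v f ∧ ∀ ε : ℝ, 0 < ε → ∃ g : E.α → F.α,
    I.mem E U v F g ∧ ∀ x ∈ U, v x * ‖f x - g x‖ ≤ ε
  nrm E U v F f := hvNorm U v f

/-!
A map in `A ∘ H_v^∞` is `T ∘ g` with `T ∈ A` and `g ∈ H_v^∞`, and its norm is the infimum of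
`‖T‖_A ‖g‖_v`. The ideal axioms come from operations on factorizations: sums factor through a
product space, rescaling `(s • T, s⁻¹ • g)` normalizes `‖g‖_v ≤ 1` for the triangle inequality,
and `h • y` factors through `ℂ` by a rank-one operator.

For injectivity, let `ι ∘ f = T ∘ g`. On `U`, `g` takes values in the closed subspace
`P = T⁻¹(ι F)`, and `T|_P = ι ∘ S` for a bounded `S : P → F`. Injectivity of `A` gives
`‖S‖_A = ‖T|_P‖_A ≤ ‖T‖_A`, so `f = S ∘ g` costs no more than the given factorization of
`ι ∘ f`. The map `g` stays holomorphic as a `P`-valued map because its derivatives take values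
in the closed subspace `P`.
-/

section WeightedSupNorm

variable {E F G : Type*} [NormedAddCommGroup F] [NormedAddCommGroup G] {U : Set E}
  {v : E → ℝ} {f : E → F} {g : E → G} {k C : ℝ}

lemma le_hvNorm (hf : BddAbove ((fun x => v x * ‖f x‖) '' U)) {x : E} (hx : x ∈ U) :
    v x * ‖f x‖ ≤ hvNorm U v f :=
  le_csSup hf ⟨x, hx, rfl⟩

lemma hvNorm_le (hC : 0 ≤ C) (h : ∀ x ∈ U, v x * ‖f x‖ ≤ C) : hvNorm U v f ≤ C :=
  Real.sSup_le (forall_mem_image.2 h) hC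

open scoped Pointwise in
lemma hvNorm_eq_mul (hk : 0 ≤ k) (h : ∀ x ∈ U, ‖f x‖ = k * ‖g x‖) :
    hvNorm U v f = k * hvNorm U v g := by
  have himage : (fun x => v x * ‖f x‖) '' U = k • (fun x => v x * ‖g x‖) '' U := by
    rw [← image_smul, image_image]
    exact image_congr fun x hx => by rw [h x hx, smul_eq_mul]; ring
  rw [hvNorm, himage, Real.sSup_smul_of_nonneg hk, smul_eq_mul, hvNorm]

lemma weighted_norm_comp_le (hf : BddAbove ((fun x => v x * ‖f x‖) '' U)) {V : Set E}
    {h : E → E} (hm : MapsTo h V U) {c : ℝ} (hc : 0 ≤ c) (hvc : ∀ x ∈ V, v x ≤ c * v (h x))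
    {x : E} (hx : x ∈ V) : v x * ‖f (h x)‖ ≤ c * hvNorm U v f :=
  calc v x * ‖f (h x)‖ ≤ c * v (h x) * ‖f (h x)‖ :=
        mul_le_mul_of_nonneg_right (hvc x hx) (norm_nonneg _)
    _ = c * (v (h x) * ‖f (h x)‖) := mul_assoc _ _ _
    _ ≤ c * hvNorm U v f := mul_le_mul_of_nonneg_left (le_hvNorm hf (hm hx)) hc

variable [NormedAddCommGroup E]

lemma IsWeight.mono {V : Set E} (hw : IsWeight U v) (hVU : V ⊆ U) : IsWeight V v :=
  ⟨hw.1.mono hVU, fun x hx => hw.2 x (hVU hx)⟩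

lemma hvNorm_nonneg (hw : IsWeight U v) (f : E → F) : 0 ≤ hvNorm U v f :=
  Real.sSup_nonneg <| forall_mem_image.2 fun x hx => mul_nonneg (hw.2 x hx).le (norm_nonneg _)

lemma weighted_norm_le_mul (hw : IsWeight U v) (hg : BddAbove ((fun x => v x * ‖g x‖) '' U))
    (hk : 0 ≤ k) (h : ∀ x ∈ U, ‖f x‖ ≤ k * ‖g x‖) {x : E} (hx : x ∈ U) :
    v x * ‖f x‖ ≤ k * hvNorm U v g :=
  calc v x * ‖f x‖ ≤ v x * (k * ‖g x‖) := mul_le_mul_of_nonneg_left (h x hx) (hw.2 x hx).le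
    _ = k * (v x * ‖g x‖) := by ring
    _ ≤ k * hvNorm U v g := mul_le_mul_of_nonneg_left (le_hvNorm hg hx) hk

lemma hvNorm_le_mul (hw : IsWeight U v) (hg : BddAbove ((fun x => v x * ‖g x‖) '' U))
    (hk : 0 ≤ k) (h : ∀ x ∈ U, ‖f x‖ ≤ k * ‖g x‖) : hvNorm U v f ≤ k * hvNorm U v g :=
  hvNorm_le (mul_nonneg hk (hvNorm_nonneg hw g)) fun _ => weighted_norm_le_mul hw hg hk h

lemma weighted_norm_prodMk_le (hw : IsWeight U v) (hf : BddAbove ((fun x => v x * ‖f x‖) '' U))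
    (hg : BddAbove ((fun x => v x * ‖g x‖) '' U)) {x : E} (hx : x ∈ U) :
    v x * ‖(f x, g x)‖ ≤ max (hvNorm U v f) (hvNorm U v g) := by
  rw [Prod.norm_def, mul_max_of_nonneg _ _ (hw.2 x hx).le]
  exact max_le_max (le_hvNorm hf hx) (le_hvNorm hg hx)

lemma hvNorm_prodMk_le (hw : IsWeight U v) (hf : BddAbove ((fun x => v x * ‖f x‖) '' U))
    (hg : BddAbove ((fun x => v x * ‖g x‖) '' U)) :
    hvNorm U v (fun x => (f x, g x)) ≤ max (hvNorm U v f) (hvNorm U v g) :=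
  hvNorm_le ((hvNorm_nonneg hw f).trans (le_max_left _ _)) fun _ =>
    weighted_norm_prodMk_le hw hf hg

variable [NormedSpace ℂ E] [NormedSpace ℂ F] [NormedSpace ℂ G]

lemma HvBdd.of_le (hd : DifferentiableOn ℂ f U) (h : ∀ x ∈ U, v x * ‖f x‖ ≤ C) : HvBdd U v f :=
  ⟨hd, C, forall_mem_image.2 h⟩

lemma HvBdd.of_norm_le (hw : IsWeight U v) (hg : HvBdd U v g) (hd : DifferentiableOn ℂ f U)
    (hk : 0 ≤ k) (h : ∀ x ∈ U, ‖f x‖ ≤ k * ‖g x‖) : HvBdd U v f :=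
  .of_le hd fun _ => weighted_norm_le_mul hw hg.2 hk h

lemma HvBdd.prodMk (hw : IsWeight U v) (hf : HvBdd U v f) (hg : HvBdd U v g) :
    HvBdd U v (fun x => (f x, g x)) :=
  .of_le (hf.1.prodMk hg.1) fun _ => weighted_norm_prodMk_le hw hf.2 hg.2

lemma HvBdd.comp (hf : HvBdd U v f) {V : Set E} {h : E → E} (hd : DifferentiableOn ℂ h V)
    (hm : MapsTo h V U) {c : ℝ} (hc : 0 ≤ c) (hvc : ∀ x ∈ V, v x ≤ c * v (h x)) :
    HvBdd V v (fun x => f (h x)) :=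
  .of_le (hf.1.comp hd hm) fun _ => weighted_norm_comp_le hf.2 hm hc hvc

end WeightedSupNorm

section ClosedSubmodule

variable {𝕜 E G : Type*} [NontriviallyNormedField 𝕜] [NormedAddCommGroup E] [NormedSpace 𝕜 E]
  [NormedAddCommGroup G] [NormedSpace 𝕜 G] {p : Submodule 𝕜 G}

lemma Submodule.tangentConeAt_subset (hp : IsClosed (p : Set G)) {x : G} (hx : x ∈ p) :
    tangentConeAt 𝕜 (p : Set G) x ⊆ p := by
  rw [tangentConeAt_eq_biInter_closure]
  refine fun y hy => closure_minimal ?_ hp (mem_iInter₂.1 hy univ Filter.univ_mem)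
  rintro _ ⟨c, -, z, ⟨-, hz⟩, rfl⟩
  exact p.smul_mem c (by simpa using p.sub_mem hz hx)

lemma HasFDerivAt.of_subtype_comp {f : E → p} {D : E →L[𝕜] p} {x : E}
    (h : HasFDerivAt (fun y => (f y : G)) (p.subtypeL.comp D) x) : HasFDerivAt f D x := by
  rw [hasFDerivAt_iff_isLittleO_nhds_zero, ← Asymptotics.isLittleO_norm_left] at h ⊢
  simpa [← Submodule.norm_coe] using h

lemma DifferentiableOn.of_subtype_comp (hp : IsClosed (p : Set G)) {f : E → p} {U : Set E}
    (hU : IsOpen U) (hf : DifferentiableOn 𝕜 (fun y => (f y : G)) U) :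
    DifferentiableOn 𝕜 f U := by
  intro x hx
  have hD := (hf.differentiableAt (hU.mem_nhds hx)).hasFDerivAt
  have hDp : ∀ e, fderiv 𝕜 (fun y => (f y : G)) x e ∈ p := by
    intro e
    have htan := hD.hasFDerivWithinAt.mapsTo_tangent_cone
      (by rw [tangentConeAt_of_mem_nhds (hU.mem_nhds hx)]; exact mem_univ e)
    refine p.tangentConeAt_subset hp (f x).2 (tangentConeAt_mono ?_ htan)
    rintro _ ⟨y, -, rfl⟩
    exact (f y).2
  exact (HasFDerivAt.of_subtype_comp (D := (fderiv 𝕜 _ x).codRestrict p hDp) hD)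
    |>.differentiableAt.differentiableWithinAt

end ClosedSubmodule

namespace IsNormedOpIdeal

variable {A : OpAssignment.{u}} {G F : BanachSp.{u}} {T : G.α →L[ℂ] F.α}

lemma comp_left (hA : IsNormedOpIdeal A) (hT : A.mem G F T) {F₀ : BanachSp.{u}}
    (S : F.α →L[ℂ] F₀.α) : A.mem G F₀ (S.comp T) ∧ A.nrm G F₀ (S.comp T) ≤ ‖S‖ * A.nrm G F T := by
  have h := hA.comp_mem G G F F₀ (.id ℂ G.α) T S hT
  rw [ContinuousLinearMap.comp_id] at h
  refine ⟨h.1, h.2.trans ?_⟩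
  exact mul_le_of_le_one_right (mul_nonneg (norm_nonneg S) (hA.nrm_nonneg G F T hT))
    ContinuousLinearMap.norm_id_le

lemma comp_right_of_norm_le_one (hA : IsNormedOpIdeal A) (hT : A.mem G F T) {G₀ : BanachSp.{u}}
    {R : G₀.α →L[ℂ] G.α} (hR : ‖R‖ ≤ 1) :
    A.mem G₀ F (T.comp R) ∧ A.nrm G₀ F (T.comp R) ≤ A.nrm G F T := by
  have h := hA.comp_mem G₀ G F F R T (.id ℂ F.α) hT
  rw [ContinuousLinearMap.id_comp] at h
  refine ⟨h.1, h.2.trans ?_⟩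
  have hT₀ := hA.nrm_nonneg G F T hT
  calc ‖ContinuousLinearMap.id ℂ F.α‖ * A.nrm G F T * ‖R‖ ≤ 1 * A.nrm G F T * 1 := by
        gcongr
        exact ContinuousLinearMap.norm_id_le
    _ = A.nrm G F T := by ring

end IsNormedOpIdeal

lemma IsNormedOpIdeal.exists_lift_of_injective {A : OpAssignment.{u}} (hA : IsNormedOpIdeal A)
    (hinj : OpInjective A) {F G G₁ : BanachSp.{u}} (ι : F.α →ₗᵢ[ℂ] G.α) {T : G₁.α →L[ℂ] G.α}
    (hT : A.mem G₁ G T) (p : Submodule ℂ G₁.α) [CompleteSpace p]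
    (hTp : ∀ z ∈ p, T z ∈ LinearMap.range ι.toLinearMap) :
    ∃ S : p →L[ℂ] F.α, A.mem ⟨p⟩ F S ∧ A.nrm ⟨p⟩ F S ≤ A.nrm G₁ G T ∧ ∀ z : p, ι (S z) = T z := by
  let S : p →L[ℂ] F.α := ι.equivRange.symm.toContinuousLinearEquiv.toContinuousLinearMap.comp
    ((T.comp p.subtypeL).codRestrict _ fun z => hTp z z.2)
  have hιS : ι.toContinuousLinearMap.comp S = T.comp p.subtypeL := by
    ext z
    exact congrArg Subtype.val (ι.equivRange.apply_symm_apply _)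
  have hTres := hA.comp_right_of_norm_le_one (G₀ := ⟨p⟩) hT p.norm_subtypeL_le
  obtain ⟨hS, hSn⟩ := hinj ⟨p⟩ F G ι S (hιS ▸ hTres.1)
  refine ⟨S, hS, ?_, fun z => congrArg (· z) hιS⟩
  rw [hSn, hιS]
  exact hTres.2

namespace compWH

variable {A : OpAssignment.{u}} {E F : BanachSp.{u}} {U : Set E.α} {v : E.α → ℝ}
  {f : E.α → F.α}

lemma nrm_le (hA : IsNormedOpIdeal A) (hw : IsWeight U v) {G : BanachSp.{u}}
    {T : G.α →L[ℂ] F.α} {g : E.α → G.α} (hT : A.mem G F T) (hg : HvBdd U v g)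
    (hfg : ∀ x ∈ U, f x = T (g x)) : (compWH A).nrm E U v F f ≤ A.nrm G F T * hvNorm U v g := by
  refine csInf_le ⟨0, ?_⟩ ⟨G, T, g, hT, hg, hfg, rfl⟩
  rintro _ ⟨G', T', g', hT', -, -, rfl⟩
  exact mul_nonneg (hA.nrm_nonneg G' F T' hT') (hvNorm_nonneg hw g')

lemma nrm_nonneg (hA : IsNormedOpIdeal A) (hw : IsWeight U v) : 0 ≤ (compWH A).nrm E U v F f :=
  Real.sInf_nonneg <| by
    rintro _ ⟨G, T, g, hT, -, -, rfl⟩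
    exact mul_nonneg (hA.nrm_nonneg G F T hT) (hvNorm_nonneg hw g)

lemma le_mul_nrm (hf : (compWH A).mem E U v F f) {k b : ℝ} (hk : 0 ≤ k)
    (h : ∀ (G : BanachSp.{u}) (T : G.α →L[ℂ] F.α) (g : E.α → G.α), A.mem G F T →
      HvBdd U v g → (∀ x ∈ U, f x = T (g x)) → b ≤ k * (A.nrm G F T * hvNorm U v g)) :
    b ≤ k * (compWH A).nrm E U v F f := by
  obtain ⟨G, T, g, hT, hg, hfg⟩ := hf
  change b ≤ k * sInf _
  rw [← smul_eq_mul, ← Real.sInf_smul_of_nonneg hk]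
  refine le_csInf ⟨_, _, ⟨G, T, g, hT, hg, hfg, rfl⟩, rfl⟩ ?_
  rintro _ ⟨_, ⟨G', T', g', hT', hg', hfg', rfl⟩, rfl⟩
  exact h G' T' g' hT' hg' hfg'

lemma exists_factor_lt (hf : (compWH A).mem E U v F f) {t : ℝ}
    (ht : (compWH A).nrm E U v F f < t) :
    ∃ (G : BanachSp.{u}) (T : G.α →L[ℂ] F.α) (g : E.α → G.α), A.mem G F T ∧ HvBdd U v g ∧
      (∀ x ∈ U, f x = T (g x)) ∧ A.nrm G F T * hvNorm U v g < t := by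
  obtain ⟨G, T, g, hT, hg, hfg⟩ := hf
  obtain ⟨_, ⟨G', T', g', hT', hg', hfg', rfl⟩, hlt⟩ :=
    exists_lt_of_csInf_lt (by exact ⟨_, G, T, g, hT, hg, hfg, rfl⟩) ht
  exact ⟨G', T', g', hT', hg', hfg', hlt⟩

lemma exists_normalized_factor (hA : IsNormedOpIdeal A) (hw : IsWeight U v)
    (hf : (compWH A).mem E U v F f) {t : ℝ} (ht : (compWH A).nrm E U v F f < t) :
    ∃ (G : BanachSp.{u}) (T : G.α →L[ℂ] F.α) (g : E.α → G.α), A.mem G F T ∧ HvBdd U v g ∧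
      (∀ x ∈ U, f x = T (g x)) ∧ A.nrm G F T ≤ t ∧ hvNorm U v g ≤ 1 := by
  obtain ⟨G, T, g, hT, hg, hfg, hlt⟩ := exists_factor_lt hf ht
  set a := A.nrm G F T
  set b := hvNorm U v g
  have ha : 0 ≤ a := hA.nrm_nonneg G F T hT
  have hb : 0 ≤ b := hvNorm_nonneg hw g
  -- rebalance as `(s • T, s⁻¹ • g)` with `s = b + δ`, so that `b ≤ s` and `s * a ≤ t`
  set δ := (t - a * b) / (a + 1)
  have hδ : 0 < δ := div_pos (by linarith) (by linarith)
  set s := b + δ with hs_def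
  have hs : 0 < s := by positivity
  have hsc : ‖(s : ℂ)‖ = s := Complex.norm_of_nonneg hs.le
  have hsc' : ‖((s⁻¹ : ℝ) : ℂ)‖ = s⁻¹ := Complex.norm_of_nonneg (inv_nonneg.2 hs.le)
  refine ⟨G, (s : ℂ) • T, fun x => ((s⁻¹ : ℝ) : ℂ) • g x, hA.smul_mem G F _ T hT,
    hg.of_norm_le hw (hg.1.const_smul _) (inv_nonneg.2 hs.le)
      (fun x _ => by rw [norm_smul, hsc']), fun x hx => ?_, ?_, ?_⟩
  · rw [hfg x hx, smul_apply, map_smul, smul_smul, ← Complex.ofReal_mul, mul_inv_cancel₀ hs.ne',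
      Complex.ofReal_one, one_smul]
  · rw [hA.nrm_smul G F _ T hT, hsc]
    have hδa : δ * a ≤ t - a * b := by
      rw [div_mul_eq_mul_div, div_le_iff₀ (by linarith)]
      nlinarith
    nlinarith
  · rw [hvNorm_eq_mul (g := g) (inv_nonneg.2 hs.le) fun x _ => by rw [norm_smul, hsc'],
      inv_mul_le_one₀ hs, hs_def]
    linarith

lemma le_nrm (hf : (compWH A).mem E U v F f) {b : ℝ}
    (h : ∀ (G : BanachSp.{u}) (T : G.α →L[ℂ] F.α) (g : E.α → G.α), A.mem G F T →
      HvBdd U v g → (∀ x ∈ U, f x = T (g x)) → b ≤ A.nrm G F T * hvNorm U v g) :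
    b ≤ (compWH A).nrm E U v F f := by
  simpa using le_mul_nrm hf zero_le_one (by simpa using h)

lemma hvBdd (hw : IsWeight U v) (hf : (compWH A).mem E U v F f) : HvBdd U v f := by
  obtain ⟨G, T, g, -, hg, hfg⟩ := hf
  exact hg.of_norm_le hw ((T.differentiable.comp_differentiableOn hg.1).congr hfg) (norm_nonneg T)
    fun x hx => hfg x hx ▸ T.le_opNorm _

lemma hvNorm_le_nrm (hA : IsNormedOpIdeal A) (hw : IsWeight U v)
    (hf : (compWH A).mem E U v F f) : hvNorm U v f ≤ (compWH A).nrm E U v F f :=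
  le_nrm hf fun G T g hT hg hfg =>
    calc hvNorm U v f ≤ ‖T‖ * hvNorm U v g :=
          hvNorm_le_mul hw hg.2 (norm_nonneg T) fun x hx => hfg x hx ▸ T.le_opNorm _
      _ ≤ A.nrm G F T * hvNorm U v g :=
          mul_le_mul_of_nonneg_right (hA.op_le_nrm G F T hT) (hvNorm_nonneg hw g)

lemma eq_zero_of_nrm_eq_zero (hA : IsNormedOpIdeal A) (hw : IsWeight U v)
    (hf : (compWH A).mem E U v F f) (h0 : (compWH A).nrm E U v F f = 0) {x : E.α} (hx : x ∈ U) :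
    f x = 0 := by
  have h := (le_hvNorm (hvBdd hw hf).2 hx).trans ((hvNorm_le_nrm hA hw hf).trans h0.le)
  rw [mul_comm] at h
  exact norm_le_zero_iff.1 (nonpos_of_mul_nonpos_left h (hw.2 x hx))

lemma zero_mem (hA : IsNormedOpIdeal A) : (compWH A).mem E U v F (fun _ => 0) :=
  ⟨F, 0, fun _ => 0, hA.zero_mem F F, .of_le (C := 0) (differentiableOn_const 0) (by simp),
    fun _ _ => rfl⟩

lemma smul_mem (hA : IsNormedOpIdeal A) (c : ℂ) (hf : (compWH A).mem E U v F f) :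
    (compWH A).mem E U v F (fun x => c • f x) := by
  obtain ⟨G, T, g, hT, hg, hfg⟩ := hf
  exact ⟨G, c • T, g, hA.smul_mem G F c T hT, hg, fun x hx => congrArg (c • ·) (hfg x hx)⟩

lemma nrm_smul_le (hA : IsNormedOpIdeal A) (hw : IsWeight U v) (c : ℂ)
    (hf : (compWH A).mem E U v F f) :
    (compWH A).nrm E U v F (fun x => c • f x) ≤ ‖c‖ * (compWH A).nrm E U v F f :=
  le_mul_nrm hf (norm_nonneg c) fun G T g hT hg hfg =>
    (nrm_le hA hw (hA.smul_mem G F c T hT) hg fun x hx => congrArg (c • ·) (hfg x hx)).trans_eq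
      (by rw [hA.nrm_smul G F c T hT, mul_assoc])

lemma nrm_smul (hA : IsNormedOpIdeal A) (hw : IsWeight U v) (c : ℂ)
    (hf : (compWH A).mem E U v F f) :
    (compWH A).nrm E U v F (fun x => c • f x) = ‖c‖ * (compWH A).nrm E U v F f := by
  rcases eq_or_ne c 0 with rfl | hc
  · rw [norm_zero, zero_mul]
    exact le_antisymm (by simpa using nrm_smul_le hA hw 0 hf) (nrm_nonneg hA hw)
  · refine le_antisymm (nrm_smul_le hA hw c hf) ?_
    have h := nrm_smul_le hA hw c⁻¹ (smul_mem hA c hf)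
    simp only [smul_smul, inv_mul_cancel₀ hc, one_smul, norm_inv] at h
    rwa [← div_eq_inv_mul, le_div_iff₀ (norm_pos_iff.2 hc), mul_comm] at h

lemma exists_factor_add (hA : IsNormedOpIdeal A) (hw : IsWeight U v) {f₁ f₂ : E.α → F.α}
    {G₁ G₂ : BanachSp.{u}} {T₁ : G₁.α →L[ℂ] F.α} {T₂ : G₂.α →L[ℂ] F.α} {g₁ : E.α → G₁.α}
    {g₂ : E.α → G₂.α} (hT₁ : A.mem G₁ F T₁) (hg₁ : HvBdd U v g₁) (hfg₁ : ∀ x ∈ U, f₁ x = T₁ (g₁ x))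
    (hT₂ : A.mem G₂ F T₂) (hg₂ : HvBdd U v g₂) (hfg₂ : ∀ x ∈ U, f₂ x = T₂ (g₂ x)) :
    ∃ (G : BanachSp.{u}) (T : G.α →L[ℂ] F.α) (g : E.α → G.α), A.mem G F T ∧ HvBdd U v g ∧
      (∀ x ∈ U, f₁ x + f₂ x = T (g x)) ∧ A.nrm G F T ≤ A.nrm G₁ F T₁ + A.nrm G₂ F T₂ ∧
      hvNorm U v g ≤ max (hvNorm U v g₁) (hvNorm U v g₂) := by
  have h₁ := hA.comp_right_of_norm_le_one (G₀ := ⟨G₁.α × G₂.α⟩) hT₁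
    (ContinuousLinearMap.norm_fst_le ℂ G₁.α G₂.α)
  have h₂ := hA.comp_right_of_norm_le_one (G₀ := ⟨G₁.α × G₂.α⟩) hT₂
    (ContinuousLinearMap.norm_snd_le ℂ G₁.α G₂.α)
  exact ⟨_, _, fun x => (g₁ x, g₂ x), hA.add_mem _ F _ _ h₁.1 h₂.1, hg₁.prodMk hw hg₂,
    fun x hx => by simp [hfg₁ x hx, hfg₂ x hx],
    (hA.nrm_add_le _ F _ _ h₁.1 h₂.1).trans (add_le_add h₁.2 h₂.2), hvNorm_prodMk_le hw hg₁.2 hg₂.2⟩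

lemma add_mem (hA : IsNormedOpIdeal A) (hw : IsWeight U v) {f₁ f₂ : E.α → F.α}
    (hf₁ : (compWH A).mem E U v F f₁) (hf₂ : (compWH A).mem E U v F f₂) :
    (compWH A).mem E U v F (fun x => f₁ x + f₂ x) := by
  obtain ⟨G₁, T₁, g₁, hT₁, hg₁, hfg₁⟩ := hf₁
  obtain ⟨G₂, T₂, g₂, hT₂, hg₂, hfg₂⟩ := hf₂
  obtain ⟨G, T, g, hT, hg, hfg, -⟩ := exists_factor_add hA hw hT₁ hg₁ hfg₁ hT₂ hg₂ hfg₂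
  exact ⟨G, T, g, hT, hg, hfg⟩

lemma nrm_add_le (hA : IsNormedOpIdeal A) (hw : IsWeight U v) {f₁ f₂ : E.α → F.α}
    (hf₁ : (compWH A).mem E U v F f₁) (hf₂ : (compWH A).mem E U v F f₂) :
    (compWH A).nrm E U v F (fun x => f₁ x + f₂ x) ≤
      (compWH A).nrm E U v F f₁ + (compWH A).nrm E U v F f₂ := by
  refine le_of_forall_pos_le_add fun ε hε => ?_
  obtain ⟨G₁, T₁, g₁, hT₁, hg₁, hfg₁, hnT₁, hng₁⟩ :=
    exists_normalized_factor hA hw hf₁ (lt_add_of_pos_right _ (half_pos hε))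
  obtain ⟨G₂, T₂, g₂, hT₂, hg₂, hfg₂, hnT₂, hng₂⟩ :=
    exists_normalized_factor hA hw hf₂ (lt_add_of_pos_right _ (half_pos hε))
  obtain ⟨G, T, g, hT, hg, hfg, hnT, hng⟩ := exists_factor_add hA hw hT₁ hg₁ hfg₁ hT₂ hg₂ hfg₂
  calc (compWH A).nrm E U v F (fun x => f₁ x + f₂ x) ≤ A.nrm G F T * hvNorm U v g :=
        nrm_le hA hw hT hg hfg
    _ ≤ A.nrm G F T * 1 :=
        mul_le_mul_of_nonneg_left (hng.trans (max_le hng₁ hng₂)) (hA.nrm_nonneg G F T hT)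
    _ ≤ (compWH A).nrm E U v F f₁ + (compWH A).nrm E U v F f₂ + ε := by linarith

/-- `x ↦ h x • y` factors through `ULift ℂ`, a copy of `ℂ` in universe `u`, by a rank-one map. -/
lemma unit_mem (hA : IsNormedOpIdeal A) (hw : IsWeight U v) {h : E.α → ℂ} (hh : HvBdd U v h)
    (y : F.α) : (compWH A).mem E U v F (fun x => h x • y) ∧
      (compWH A).nrm E U v F (fun x => h x • y) = hvNorm U v h * ‖y‖ := by
  let e : ULift.{u} ℂ ≃ₗᵢ[ℂ] ℂ := LinearIsometryEquiv.ulift ℂ ℂ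
  let φ : ULift.{u} ℂ →L[ℂ] ℂ := e.toLinearIsometry.toContinuousLinearMap
  have hgn : ∀ x ∈ U, ‖e.symm (h x)‖ = 1 * ‖h x‖ := fun x _ => by rw [one_mul, e.symm.norm_map]
  have hg : HvBdd U v (fun x => e.symm (h x)) :=
    hh.of_norm_le hw (e.symm.toContinuousLinearEquiv.differentiable.comp_differentiableOn hh.1)
      zero_le_one fun x hx => (hgn x hx).le
  have hfg : ∀ x ∈ U, h x • y = φ.smulRight y (e.symm (h x)) := fun x _ => by simp [φ]
  obtain ⟨hr, hrn⟩ := hA.rank_one_mem ⟨ULift.{u} ℂ⟩ F φ y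
  have hmem : (compWH A).mem E U v F (fun x => h x • y) := ⟨_, _, _, hr, hg, hfg⟩
  refine ⟨hmem, le_antisymm ?_ ?_⟩
  · calc (compWH A).nrm E U v F (fun x => h x • y)
        ≤ A.nrm ⟨ULift.{u} ℂ⟩ F (φ.smulRight y) * hvNorm U v (fun x => e.symm (h x)) :=
          nrm_le hA hw hr hg hfg
      _ = ‖φ‖ * ‖y‖ * hvNorm U v h := by rw [hrn, hvNorm_eq_mul zero_le_one hgn, one_mul]
      _ ≤ 1 * ‖y‖ * hvNorm U v h := by
          gcongr
          · exact hvNorm_nonneg hw h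
          · exact e.toLinearIsometry.norm_toContinuousLinearMap_le
      _ = hvNorm U v h * ‖y‖ := by ring
  · have hyn : ∀ x ∈ U, ‖h x • y‖ = ‖y‖ * ‖h x‖ := fun x _ => by rw [norm_smul, mul_comm]
    calc hvNorm U v h * ‖y‖ = hvNorm U v (fun x => h x • y) := by
          rw [mul_comm, hvNorm_eq_mul (norm_nonneg y) hyn]
      _ ≤ (compWH A).nrm E U v F (fun x => h x • y) := hvNorm_le_nrm hA hw hmem

lemma comp_mem (hA : IsNormedOpIdeal A) (hw : IsWeight U v) {V : Set E.α} (hVU : V ⊆ U)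
    {h : E.α → E.α} (hd : DifferentiableOn ℂ h V) (hm : MapsTo h V U) {c : ℝ} (hc : 0 ≤ c)
    (hvc : ∀ x ∈ V, v x ≤ c * v (h x)) {G : BanachSp.{u}} (T : F.α →L[ℂ] G.α)
    (hf : (compWH A).mem E U v F f) :
    (compWH A).mem E V v G (fun x => T (f (h x))) ∧
      (compWH A).nrm E V v G (fun x => T (f (h x))) ≤ ‖T‖ * (compWH A).nrm E U v F f * c := by
  have hfactor : ∀ (G₁ : BanachSp.{u}) (T₁ : G₁.α →L[ℂ] F.α) (g₁ : E.α → G₁.α), A.mem G₁ F T₁ →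
      HvBdd U v g₁ → (∀ x ∈ U, f x = T₁ (g₁ x)) →
      (compWH A).mem E V v G (fun x => T (f (h x))) ∧
        (compWH A).nrm E V v G (fun x => T (f (h x))) ≤
          ‖T‖ * c * (A.nrm G₁ F T₁ * hvNorm U v g₁) := by
    intro G₁ T₁ g₁ hT₁ hg₁ hfg₁
    obtain ⟨hTT₁, hTT₁n⟩ := hA.comp_left hT₁ T
    have hgh := hg₁.comp hd hm hc hvc
    have hfgh : ∀ x ∈ V, T (f (h x)) = T.comp T₁ (g₁ (h x)) := fun x hx => by
      rw [hfg₁ (h x) (hm hx), ContinuousLinearMap.comp_apply]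
    refine ⟨⟨G₁, _, _, hTT₁, hgh, hfgh⟩, ?_⟩
    calc (compWH A).nrm E V v G (fun x => T (f (h x)))
        ≤ A.nrm G₁ G (T.comp T₁) * hvNorm V v (fun x => g₁ (h x)) :=
          nrm_le hA (hw.mono hVU) hTT₁ hgh hfgh
      _ ≤ ‖T‖ * A.nrm G₁ F T₁ * (c * hvNorm U v g₁) :=
          mul_le_mul hTT₁n
            (hvNorm_le (mul_nonneg hc (hvNorm_nonneg hw g₁)) fun _ =>
              weighted_norm_comp_le hg₁.2 hm hc hvc)
            (hvNorm_nonneg (hw.mono hVU) _) (mul_nonneg (norm_nonneg T) (hA.nrm_nonneg _ _ _ hT₁))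
      _ = ‖T‖ * c * (A.nrm G₁ F T₁ * hvNorm U v g₁) := by ring
  obtain ⟨G₁, T₁, g₁, hT₁, hg₁, hfg₁⟩ := hf
  refine ⟨(hfactor G₁ T₁ g₁ hT₁ hg₁ hfg₁).1, ?_⟩
  rw [mul_right_comm]
  exact le_mul_nrm ⟨G₁, T₁, g₁, hT₁, hg₁, hfg₁⟩ (mul_nonneg (norm_nonneg T) hc)
    fun G₂ T₂ g₂ hT₂ hg₂ hfg₂ => (hfactor G₂ T₂ g₂ hT₂ hg₂ hfg₂).2

/-- `f` factors through the closed subspace `T⁻¹(range ι)`, which contains `g(U)`. -/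
lemma exists_factor_of_isometry_comp (hA : IsNormedOpIdeal A) (hinj : OpInjective A)
    (hU : IsOpen U) (hw : IsWeight U v) {G G₁ : BanachSp.{u}} (ι : F.α →ₗᵢ[ℂ] G.α)
    {T : G₁.α →L[ℂ] G.α} {g : E.α → G₁.α} (hT : A.mem G₁ G T) (hg : HvBdd U v g)
    (hfg : ∀ x ∈ U, ι (f x) = T (g x)) :
    ∃ (G₀ : BanachSp.{u}) (S : G₀.α →L[ℂ] F.α) (g₀ : E.α → G₀.α), A.mem G₀ F S ∧
      HvBdd U v g₀ ∧ (∀ x ∈ U, f x = S (g₀ x)) ∧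
        A.nrm G₀ F S * hvNorm U v g₀ ≤ A.nrm G₁ G T * hvNorm U v g := by
  classical
  let p : Submodule ℂ G₁.α := ι.range.comap (T : G₁.α →ₗ[ℂ] G.α)
  have hp : IsClosed (p : Set G₁.α) := by
    rw [Submodule.comap_coe]
    refine IsClosed.preimage T.continuous ?_
    exact ι.isometry.isClosedEmbedding.isClosed_range
  have := hp.completeSpace_coe
  obtain ⟨S, hS, hSn, hιS⟩ := hA.exists_lift_of_injective hinj ι hT p fun z hz => hz
  have hgp : ∀ x ∈ U, g x ∈ p := fun x hx => ⟨f x, hfg x hx⟩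
  let g₀ : E.α → p := fun x => if hx : x ∈ U then ⟨g x, hgp x hx⟩ else 0
  have hg₀ : ∀ x ∈ U, (g₀ x : G₁.α) = g x := fun x hx => by simp [g₀, hx]
  have hg₀n : ∀ x ∈ U, ‖g₀ x‖ = 1 * ‖g x‖ := fun x hx => by
    rw [one_mul, ← Submodule.norm_coe, hg₀ x hx]
  refine ⟨⟨p⟩, S, g₀, hS,
    hg.of_norm_le hw (.of_subtype_comp hp hU (hg.1.congr hg₀)) zero_le_one fun x hx =>
      (hg₀n x hx).le, fun x hx => ι.injective ?_, ?_⟩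
  · rw [hιS, hg₀ x hx, hfg x hx]
  · rw [hvNorm_eq_mul zero_le_one hg₀n, one_mul]
    exact mul_le_mul_of_nonneg_right hSn (hvNorm_nonneg hw g)

lemma whInjective (hA : IsNormedOpIdeal A) (hinj : OpInjective A) : WHInjective (compWH A) := by
  intro E U v hU hw F G f _ ι hιf
  obtain ⟨G₁, T, g, hT, hg, hfg⟩ := hιf
  obtain ⟨G₀, S, g₀, hS, hg₀, hfg₀, -⟩ :=
    exists_factor_of_isometry_comp hA hinj hU hw ι hT hg hfg
  have hf : (compWH A).mem E U v F f := ⟨G₀, S, g₀, hS, hg₀, hfg₀⟩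
  refine ⟨hf, le_antisymm ?_ ?_⟩
  · refine le_nrm ⟨G₁, T, g, hT, hg, hfg⟩ fun G₂ T₂ g₂ hT₂ hg₂ hfg₂ => ?_
    obtain ⟨G₃, S₃, g₃, hS₃, hg₃, hfg₃, hle⟩ :=
      exists_factor_of_isometry_comp hA hinj hU hw ι hT₂ hg₂ hfg₂
    exact (nrm_le hA hw hS₃ hg₃ hfg₃).trans hle
  · have h := (comp_mem hA hw subset_rfl differentiableOn_id (mapsTo_id U) zero_le_one
      (fun x _ => (one_mul (v x)).ge) ι.toContinuousLinearMap hf).2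
    rw [mul_one] at h
    exact h.trans (mul_le_of_le_one_left (nrm_nonneg hA hw) ι.norm_toContinuousLinearMap_le)

end compWH

/-- if `A` is an injective normed operator ideal then `A ∘ H_v^∞` is an
injective normed weighted holomorphic ideal. -/
theorem composition_with_injective_ideal (A : OpAssignment.{u})
    (hA : IsNormedOpIdeal A) (hinj : OpInjective A) :
    IsNormedWHIdeal (compWH A) ∧ WHInjective (compWH A) :=
  ⟨{ mem_hv := fun _ _ _ _ hw _ _ hf => compWH.hvBdd hw hf
     zero_mem := fun _ _ _ _ _ _ => compWH.zero_mem hA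
     add_mem := fun _ _ _ _ hw _ _ _ hf hg => compWH.add_mem hA hw hf hg
     smul_mem := fun _ _ _ _ _ _ c _ hf => compWH.smul_mem hA c hf
     nrm_nonneg := fun _ _ _ _ hw _ _ _ => compWH.nrm_nonneg hA hw
     nrm_eq_zero := fun _ _ _ _ hw _ _ hf h0 _ hx => compWH.eq_zero_of_nrm_eq_zero hA hw hf h0 hx
     nrm_add_le := fun _ _ _ _ hw _ _ _ hf hg => compWH.nrm_add_le hA hw hf hg
     nrm_smul := fun _ _ _ _ hw _ c _ hf => compWH.nrm_smul hA hw c hf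
     hv_le_nrm := fun _ _ _ _ hw _ _ hf => compWH.hvNorm_le_nrm hA hw hf
     unit_mem := fun _ _ _ _ hw _ _ hh y => compWH.unit_mem hA hw hh y
     comp_mem := fun _ _ _ _ hw _ _ hVU _ hd hm _ hc hvc _ _ T _ hf =>
       compWH.comp_mem hA hw hVU hd hm hc hvc T hf },
    compWH.whInjective hA hinj⟩

end
end

section
/- Let [I,‖·‖_I] be a Banach weighted holomorphic ideal, let U be an open subset of a complex Banach space E with weight v, let F be a complex Banach space, and let f ∈ H_v^∞(U,F). Then f belongs to the closed injective hull (\bar{I})^inj(U,F) if and only if there exist a complex Banach space G, a mapping g ∈ I(U,G) and a function N : (0,∞) → (0,∞) such that ‖Σ_{i=1}^n λ_i v(x_i) f(x_i)‖ ≤ N(ε)‖Σ_{i=1}^n λ_i v(x_i) g(x_i)‖ + ε Σ_{i=1}^n |λ_i| for all n ∈ ℕ, λ_1,…,λ_n ∈ ℂ, x_1,…,x_n ∈ U and ε > 0. -/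
open scoped ENNReal
open Set

noncomputable section

universe u v w

/-!
If `ι_F ∘ f` is the `‖·‖_v`-limit of maps `h k ∈ I(U, ℓ∞(B_{F*}))` with
`‖ι_F ∘ f - h k‖_v ≤ 1/(k+1)`, completeness of `I` glues the rescaled maps `c k • h k`, where
`∑ c k ‖h k‖_I < ∞`, into one `g ∈ I(U, ℓ∞(ℕ, ℓ∞(B_{F*})))` whose `k`-th coordinate is `c k • h k`;
reading off the `k`-th coordinate gives the inequality with `N ε = 1 / c k` for `1/(k+1) ≤ ε`.

Conversely, fix `ε` and `φ ∈ B_{F*}`. The inequality says that `μ ↦ ∑ μ x v(x) φ(f x)` is bounded by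
the norm of `(N ε • ∑ μ x v(x) g(x), ε • μ)` in `G ⊕₁ ℓ¹(U)`, so Hahn–Banach yields `ψ_φ ∈ G*` with
`‖ψ_φ‖ ≤ N ε` and `v(x) ‖φ(f x) - ψ_φ(g x)‖ ≤ ε` on `U`. The operator `S = (ψ_φ)_φ : G → ℓ∞(B_{F*})`
then makes `S ∘ g ∈ I` an `ε`-approximation of `ι_F ∘ f`.
-/

section Duality

variable {𝕜 : Type*} [RCLike 𝕜]

theorem exists_strongDual_comp_eq_of_norm_le {M X : Type*} [AddCommGroup M] [Module 𝕜 M]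
    [NormedAddCommGroup X] [NormedSpace 𝕜 X] (B : M →ₗ[𝕜] X) (u : M →ₗ[𝕜] 𝕜)
    (hu : ∀ m, ‖u m‖ ≤ ‖B m‖) :
    ∃ Φ : StrongDual 𝕜 X, ‖Φ‖ ≤ 1 ∧ ∀ m, Φ (B m) = u m := by
  have hker : LinearMap.ker B ≤ LinearMap.ker u := fun m hm => by
    simpa [LinearMap.mem_ker.1 hm] using hu m
  let u₀ : LinearMap.range B →ₗ[𝕜] 𝕜 :=
    (LinearMap.ker B).liftQ u hker ∘ₗ B.quotKerEquivRange.symm.toLinearMap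
  have hu₀ : ∀ m, u₀ (B.rangeRestrict m) = u m := fun m => by
    change (LinearMap.ker B).liftQ u hker (B.quotKerEquivRange.symm ⟨B m, _⟩) = u m
    rw [LinearMap.quotKerEquivRange_symm_apply_image]
    rfl
  have hbound : ∀ w, ‖u₀ w‖ ≤ 1 * ‖w‖ := by
    rintro ⟨_, m, rfl⟩
    simpa using hu₀ m ▸ hu m
  obtain ⟨Φ, hΦ, hnorm⟩ := exists_extension_norm_eq _ (u₀.mkContinuous 1 hbound)
  exact ⟨Φ, hnorm ▸ LinearMap.mkContinuous_norm_le _ zero_le_one _,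
    fun m => (hΦ (B.rangeRestrict m)).trans (hu₀ m)⟩

open Classical in
def finsuppToL1 (D : Type*) : (D →₀ 𝕜) →ₗ[𝕜] lp (fun _ : D => 𝕜) 1 :=
  Finsupp.lsum 𝕜 fun d => lp.lsingle (𝕜 := 𝕜) (E := fun _ : D => 𝕜) 1 d

theorem norm_finsuppToL1 {D : Type*} (μ : D →₀ 𝕜) :
    ‖finsuppToL1 D μ‖ = μ.sum fun _ c => ‖c‖ := by
  classical
  simpa [finsuppToL1, Finsupp.sum] using lp.norm_sum_single (p := 1) (by norm_num) μ μ.support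

theorem Finsupp.sum_eq_sum_fin {D M N : Type*} [Zero M] [AddCommMonoid N] (μ : D →₀ M)
    (g : D → M → N) :
    μ.sum g = ∑ i, g (μ.support.equivFin.symm i) (μ (μ.support.equivFin.symm i)) := by
  rw [Finsupp.sum, ← Finset.sum_coe_sort μ.support]
  exact (Equiv.sum_comp μ.support.equivFin.symm fun d : μ.support => g d (μ d)).symm

theorem exists_strongDual_approx_of_dominated {D G : Type*} [NormedAddCommGroup G]
    [NormedSpace 𝕜 G] (s : D → 𝕜) (b : D → G) {N ε : ℝ} (hN : 0 ≤ N) (hε : 0 ≤ ε)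
    (hdom : ∀ (n : ℕ) (μ : Fin n → 𝕜) (d : Fin n → D),
      ‖∑ i, μ i * s (d i)‖ ≤ N * ‖∑ i, μ i • b (d i)‖ + ε * ∑ i, ‖μ i‖) :
    ∃ ψ : StrongDual 𝕜 G, ‖ψ‖ ≤ N ∧ ∀ d, ‖s d - ψ (b d)‖ ≤ ε := by
  classical
  let L1 := lp (fun _ : D => 𝕜) 1
  let e := (WithLp.linearEquiv 1 𝕜 (G × L1)).symm
  let B : (D →₀ 𝕜) →ₗ[𝕜] WithLp 1 (G × L1) :=
    e.toLinearMap ∘ₗ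
      (((N : 𝕜) • Finsupp.linearCombination 𝕜 b).prod ((ε : 𝕜) • finsuppToL1 D))
  have hB : ∀ μ,
      ‖B μ‖ = N * ‖Finsupp.linearCombination 𝕜 b μ‖ + ε * μ.sum fun _ c => ‖c‖ := by
    intro μ
    rw [WithLp.prod_norm_eq_of_L1]
    simp [B, e, norm_smul, abs_of_nonneg hN, abs_of_nonneg hε, norm_finsuppToL1 μ]
  have hu : ∀ μ, ‖Finsupp.linearCombination 𝕜 s μ‖ ≤ ‖B μ‖ := by
    intro μ
    rw [hB, Finsupp.linearCombination_apply, Finsupp.linearCombination_apply,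
      Finsupp.sum_eq_sum_fin, Finsupp.sum_eq_sum_fin, Finsupp.sum_eq_sum_fin]
    exact hdom _ _ _
  obtain ⟨Φ, hΦ, hΦB⟩ := exists_strongDual_comp_eq_of_norm_le B _ hu
  have hΦ_le : ∀ x, ‖Φ x‖ ≤ ‖x‖ := fun x =>
    (Φ.le_opNorm x).trans (mul_le_of_le_one_left (norm_nonneg x) hΦ)
  let inl : G →L[𝕜] WithLp 1 (G × L1) :=
    (WithLp.prodContinuousLinearEquiv 1 𝕜 G L1).symm.toContinuousLinearMap ∘L
      ContinuousLinearMap.inl 𝕜 G L1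
  refine ⟨(N : 𝕜) • Φ ∘L inl, ContinuousLinearMap.opNorm_le_bound _ hN fun y => ?_, fun d => ?_⟩
  · calc ‖((N : 𝕜) • Φ ∘L inl) y‖ = N * ‖Φ (inl y)‖ := by simp [abs_of_nonneg hN]
      _ ≤ N * ‖y‖ := by gcongr; simpa [inl] using hΦ_le (inl y)
  · let δ := e (0, (ε : 𝕜) • finsuppToL1 D (Finsupp.single d 1))
    have hsplit : B (Finsupp.single d 1) = inl ((N : 𝕜) • b d) + δ := by
      change e _ = e ((N : 𝕜) • b d, 0) + e _
      rw [← map_add]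
      simp
    have hs : s d = Φ (B (Finsupp.single d 1)) := by simp [hΦB]
    calc ‖s d - ((N : 𝕜) • Φ ∘L inl) (b d)‖ = ‖Φ δ‖ := by rw [hs, hsplit]; simp
      _ ≤ ε := (hΦ_le δ).trans <| by
          simp [δ, e, norm_smul, abs_of_nonneg hε, norm_finsuppToL1 (Finsupp.single d (1 : 𝕜))]

def boundedFamilyToLinf {β G : Type*} [NormedAddCommGroup G] [NormedSpace 𝕜 G]
    (ψ : β → StrongDual 𝕜 G) {C : ℝ} (hψ : ∀ b, ‖ψ b‖ ≤ C) :
    G →L[𝕜] lp (fun _ : β => 𝕜) ∞ :=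
  have hbound : ∀ y b, ‖ψ b y‖ ≤ max C 0 * ‖y‖ := fun y b =>
    ((ψ b).le_opNorm y).trans (by gcongr; exact (hψ b).trans (le_max_left C 0))
  LinearMap.mkContinuous
    { toFun y := ⟨fun b => ψ b y, memℓp_infty ⟨_, Set.forall_mem_range.2 (hbound y)⟩⟩
      map_add' y z := lp.ext <| funext fun b => map_add (ψ b) y z
      map_smul' c y := lp.ext <| funext fun b => map_smul (ψ b) c y }
    (max C 0) fun y => lp.norm_le_of_forall_le (by positivity) (hbound y)

end Duality

section Iota

variable {F : Type u} [NormedAddCommGroup F] [NormedSpace ℂ F]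

theorem norm_iota (y : F) : ‖iota F y‖ = ‖y‖ := by
  refine le_antisymm ?_ ?_
  · exact (iota F).le_of_opNorm_le (LinearMap.mkContinuous_norm_le _ zero_le_one _) y
      |>.trans_eq (one_mul _)
  · obtain ⟨φ, hφ, hφy⟩ := exists_dual_vector'' ℂ y
    calc ‖y‖ = ‖iota F y ⟨φ, hφ⟩‖ := by change _ = ‖φ y‖; simp [hφy]
      _ ≤ ‖iota F y‖ := lp.norm_apply_le_norm ENNReal.top_ne_zero _ _

theorem HvBdd.iota_comp {E : Type*} [NormedAddCommGroup E] [NormedSpace ℂ E] {U : Set E}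
    {v : E → ℝ} {f : E → F} (hf : HvBdd U v f) : HvBdd U v fun x => iota F (f x) :=
  ⟨(iota F).differentiable.comp_differentiableOn hf.1, by simpa only [norm_iota] using hf.2⟩

theorem exists_linf_approx_of_dominated {D G : Type*} [NormedAddCommGroup G] [NormedSpace ℂ G]
    (a : D → F) (b : D → G) {N ε : ℝ} (hN : 0 ≤ N) (hε : 0 ≤ ε)
    (hdom : ∀ (n : ℕ) (μ : Fin n → ℂ) (d : Fin n → D),
      ‖∑ i, μ i • a (d i)‖ ≤ N * ‖∑ i, μ i • b (d i)‖ + ε * ∑ i, ‖μ i‖) :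
    ∃ S : G →L[ℂ] Linf F, ∀ d, ‖iota F (a d) - S (b d)‖ ≤ ε := by
  choose ψ hψN hψ using fun φ : BallDual F =>
    exists_strongDual_approx_of_dominated (fun d => φ.1 (a d)) b hN hε fun n μ d =>
      calc ‖∑ i, μ i * φ.1 (a (d i))‖ = ‖φ.1 (∑ i, μ i • a (d i))‖ := by simp
        _ ≤ ‖∑ i, μ i • a (d i)‖ := φ.1.le_of_opNorm_le φ.2 _ |>.trans_eq (one_mul _)
        _ ≤ _ := hdom n μ d
  exact ⟨boundedFamilyToLinf ψ hψN, fun d => lp.norm_le_of_forall_le hε fun φ => hψ φ d⟩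

end Iota

theorem norm_sum_smul_le_of_weighted_approx {X Y : Type*} [NormedAddCommGroup Y]
    [NormedSpace ℂ Y] {U : Set X} {v : X → ℝ} (hv : ∀ x ∈ U, 0 ≤ v x) {a b : X → Y} {δ : ℝ}
    (hab : ∀ x ∈ U, v x * ‖a x - b x‖ ≤ δ) {n : ℕ} (lam : Fin n → ℂ) (x : Fin n → X)
    (hx : ∀ i, x i ∈ U) :
    ‖∑ i, lam i • v (x i) • a (x i)‖ ≤ ‖∑ i, lam i • v (x i) • b (x i)‖ + δ * ∑ i, ‖lam i‖ := by
  have hsplit : ∑ i, lam i • v (x i) • a (x i) =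
      ∑ i, lam i • v (x i) • b (x i) + ∑ i, lam i • v (x i) • (a (x i) - b (x i)) := by
    simp only [smul_sub, Finset.sum_sub_distrib, add_sub_cancel]
  rw [hsplit, Finset.mul_sum]
  refine (norm_add_le _ _).trans ?_
  gcongr
  refine (norm_sum_le _ _).trans (Finset.sum_le_sum fun i _ => ?_)
  rw [norm_smul, norm_smul, Real.norm_of_nonneg (hv _ (hx i)), mul_comm δ]
  exact mul_le_mul_of_nonneg_left (hab _ (hx i)) (norm_nonneg _)

def EhrlingDominates {E F G : Type*} [NormedAddCommGroup F] [NormedSpace ℂ F]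
    [NormedAddCommGroup G] [NormedSpace ℂ G]
    (U : Set E) (v : E → ℝ) (f : E → F) (g : E → G) (N : ℝ → ℝ) : Prop :=
  ∀ (n : ℕ) (lam : Fin n → ℂ) (x : Fin n → E), (∀ i, x i ∈ U) → ∀ ε : ℝ, 0 < ε →
    ‖∑ i, lam i • v (x i) • f (x i)‖ ≤ N ε * ‖∑ i, lam i • v (x i) • g (x i)‖ + ε * ∑ i, ‖lam i‖

theorem EhrlingDominates.of_comp {E F F' G : Type*} [NormedAddCommGroup F] [NormedSpace ℂ F]
    [NormedAddCommGroup F'] [NormedSpace ℂ F'] [NormedAddCommGroup G] [NormedSpace ℂ G]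
    {U : Set E} {v : E → ℝ} {f : E → F} {g : E → G} {N : ℝ → ℝ} {T : F →L[ℂ] F'}
    (hT : ∀ y, ‖T y‖ = ‖y‖) (h : EhrlingDominates U v (fun x => T (f x)) g N) :
    EhrlingDominates U v f g N := by
  intro n lam x hx ε hε
  calc ‖∑ i, lam i • v (x i) • f (x i)‖ = ‖T (∑ i, lam i • v (x i) • f (x i))‖ := (hT _).symm
    _ = ‖∑ i, lam i • v (x i) • T (f (x i))‖ := by simp [map_sum, T.map_smul_of_tower]
    _ ≤ _ := h n lam x hx ε hε

def BanachSp.linftySeq (Y : BanachSp.{u}) : BanachSp.{u} := ⟨lp (fun _ : ℕ => Y) ∞⟩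

namespace IsNormedWHIdeal

variable {I : WHAssignment.{u}} (hI : IsNormedWHIdeal I) {E F : BanachSp.{u}} {U : Set E}
  {v : E → ℝ} (hU : IsOpen U) (hv : IsWeight U v)

include hI hU hv

theorem comp_clm {G : BanachSp.{u}} (T : F →L[ℂ] G) {f : E → F} (hf : I.mem E U v F f) :
    I.mem E U v G (fun x => T (f x)) ∧
      I.nrm E U v G (fun x => T (f x)) ≤ ‖T‖ * I.nrm E U v F f := by
  simpa using hI.comp_mem E U v hU hv U hU subset_rfl id differentiableOn_id (Set.mapsTo_id U)
    1 zero_le_one (fun x _ => by simp) F G T f hf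

theorem weight_mul_norm_le_nrm {f : E → F} (hf : I.mem E U v F f) {x : E} (hx : x ∈ U) :
    v x * ‖f x‖ ≤ I.nrm E U v F f :=
  (le_csSup (hI.mem_hv E U v hU hv F f hf).2 ⟨x, hx, rfl⟩).trans (hI.hv_le_nrm E U v hU hv F f hf)

theorem sub_mem {f g : E → F} (hf : I.mem E U v F f) (hg : I.mem E U v F g) :
    I.mem E U v F (fun x => f x - g x) := by
  simpa [sub_eq_add_neg] using
    hI.add_mem E U v hU hv F f _ hf (hI.smul_mem E U v hU hv F (-1) g hg)

theorem nrm_sub_comm {f g : E → F} (hf : I.mem E U v F f) (hg : I.mem E U v F g) :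
    I.nrm E U v F (fun x => f x - g x) = I.nrm E U v F (fun x => g x - f x) := by
  simpa using hI.nrm_smul E U v hU hv F (-1) _ (hI.sub_mem hU hv hg hf)

theorem sum_mem {ι : Type*} (s : Finset ι) {h : ι → E → F}
    (hh : ∀ k ∈ s, I.mem E U v F (h k)) :
    I.mem E U v F (fun x => ∑ k ∈ s, h k x) ∧
      I.nrm E U v F (fun x => ∑ k ∈ s, h k x) ≤ ∑ k ∈ s, I.nrm E U v F (h k) := by
  classical
  induction s using Finset.induction_on with
  | empty =>
    have h0 := hI.zero_mem E U v hU hv F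
    simpa using And.intro h0 (hI.nrm_smul E U v hU hv F 0 _ h0).le
  | insert a s ha ih =>
    obtain ⟨hs, hsn⟩ := ih fun k hk => hh k (Finset.mem_insert_of_mem hk)
    have ha' := hh a (Finset.mem_insert_self a s)
    simp only [Finset.sum_insert ha]
    exact ⟨hI.add_mem E U v hU hv F _ _ ha' hs,
      (hI.nrm_add_le E U v hU hv F _ _ ha' hs).trans (by gcongr)⟩

theorem iota_comp_mem_whClosure {f : E → F} (hf : HvBdd U v f) {G : BanachSp.{u}} {g : E → G}
    {N : ℝ → ℝ} (hg : I.mem E U v G g) (hN : ∀ ε : ℝ, 0 < ε → 0 < N ε)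
    (hdom : EhrlingDominates U v f g N) :
    (whClosure I).mem E U v (LinfSp F) fun x => iota F (f x) := by
  refine ⟨hf.iota_comp, fun ε hε => ?_⟩
  obtain ⟨S, hS⟩ := exists_linf_approx_of_dominated (D := U) (fun x => v x • f x)
    (fun x => v x • g x) (hN ε hε).le hε.le fun n μ d =>
      hdom n μ (fun i => d i) (fun i => (d i).2) ε hε
  refine ⟨fun x => S (g x), (hI.comp_clm hU hv (G := LinfSp F) S hg).1, fun x hx => ?_⟩
  calc v x * ‖iota F (f x) - S (g x)‖ = ‖iota F (v x • f x) - S (v x • g x)‖ := by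
        rw [(iota F).map_smul_of_tower, S.map_smul_of_tower, ← smul_sub, norm_smul,
          Real.norm_of_nonneg (hv.2 x hx).le]
    _ ≤ ε := hS ⟨x, hx⟩

end IsNormedWHIdeal

namespace IsBanachWHIdeal

variable {I : WHAssignment.{u}} (hI : IsBanachWHIdeal I) {E F : BanachSp.{u}} {U : Set E}
  {v : E → ℝ} (hU : IsOpen U) (hv : IsWeight U v)

include hI hU hv

theorem exists_hasSum {h : ℕ → E → F} (hh : ∀ k, I.mem E U v F (h k))
    (hsum : Summable fun k => I.nrm E U v F (h k)) :
    ∃ g, I.mem E U v F g ∧ ∀ x ∈ U, HasSum (fun k => h k x) (g x) := by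
  have hI' := hI.toIsNormedWHIdeal
  let S : ℕ → E → F := fun n x => ∑ k ∈ Finset.range n, h k x
  let r : ℕ → ℝ := fun n => ∑ k ∈ Finset.range n, I.nrm E U v F (h k)
  have hS : ∀ n, I.mem E U v F (S n) := fun n => (hI'.sum_mem hU hv _ fun k _ => hh k).1
  have hSr : ∀ m n, n ≤ m → I.nrm E U v F (fun x => S m x - S n x) ≤ r m - r n := by
    intro m n hnm
    simp only [S, r, ← Finset.sum_Ico_eq_sub _ hnm]
    exact (hI'.sum_mem hU hv _ fun k _ => hh k).2
  have hSr_dist : ∀ m n, I.nrm E U v F (fun x => S m x - S n x) ≤ dist (r m) (r n) := by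
    intro m n
    rcases le_total n m with hnm | hmn
    · exact (hSr m n hnm).trans ((le_abs_self _).trans_eq (Real.dist_eq _ _).symm)
    · rw [hI'.nrm_sub_comm hU hv (hS m) (hS n), dist_comm]
      exact (hSr n m hmn).trans ((le_abs_self _).trans_eq (Real.dist_eq _ _).symm)
  obtain ⟨g, hg, hSg⟩ := hI.complete E U v hU hv F S hS fun ε hε => by
    obtain ⟨N, hN⟩ := Metric.cauchySeq_iff.1 hsum.hasSum.tendsto_sum_nat.cauchySeq ε hε
    exact ⟨N, fun m hm n hn => (hSr_dist m n).trans_lt (hN m hm n hn)⟩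
  refine ⟨g, hg, fun x hx => ?_⟩
  have hpt : ∀ {d : E → F}, I.mem E U v F d → ‖d x‖ ≤ I.nrm E U v F d / v x := fun hd =>
    (le_div_iff₀ (hv.2 x hx)).2 (by rw [mul_comm]; exact hI'.weight_mul_norm_le_nrm hU hv hd hx)
  have hsummable : Summable fun k => h k x :=
    Summable.of_norm_bounded (hsum.div_const (v x)) fun k => hpt (hh k)
  refine hsummable.hasSum_iff_tendsto_nat.2 (tendsto_iff_norm_sub_tendsto_zero.2 ?_)
  refine squeeze_zero (fun n => norm_nonneg _) (fun n => hpt (hI'.sub_mem hU hv (hS n) hg)) ?_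
  have hnrm : Filter.Tendsto (fun n => I.nrm E U v F fun y => S n y - g y) Filter.atTop (nhds 0) :=
    Metric.tendsto_atTop.2 fun ε hε => by
      obtain ⟨N, hN⟩ := hSg ε hε
      refine ⟨N, fun n hn => ?_⟩
      rw [Real.dist_0_eq_abs,
        abs_of_nonneg (hI'.nrm_nonneg E U v hU hv F _ (hI'.sub_mem hU hv (hS n) hg))]
      exact hN n hn
  simpa using hnrm.div_const (v x)

theorem exists_mem_linftySeq_smul_eq {h : ℕ → E → F} (hh : ∀ k, I.mem E U v F (h k)) :
    ∃ (c : ℕ → ℝ) (g : E → lp (fun _ : ℕ => F) ∞), (∀ k, 0 < c k) ∧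
      I.mem E U v F.linftySeq g ∧ ∀ x ∈ U, ∀ k, g x k = (c k : ℂ) • h k x := by
  have hI' := hI.toIsNormedWHIdeal
  let c : ℕ → ℝ := fun k => (1 / 2) ^ k / (1 + I.nrm E U v F (h k))
  have hnrm : ∀ k, 0 ≤ I.nrm E U v F (h k) := fun k => hI'.nrm_nonneg E U v hU hv F _ (hh k)
  have hc : ∀ k, 0 < c k := fun k => by have := hnrm k; positivity
  let T : ℕ → F →L[ℂ] F.linftySeq := fun k =>
    (c k : ℂ) • lp.singleContinuousLinearMap ℂ (fun _ : ℕ => F) ∞ k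
  have hT : ∀ k, ‖T k‖ ≤ c k := fun k =>
    ContinuousLinearMap.opNorm_le_bound _ (hc k).le fun y => by
      change ‖(c k : ℂ) • lp.single (E := fun _ : ℕ => F.α) ∞ k y‖ ≤ _
      rw [norm_smul, lp.norm_single ENNReal.zero_lt_top, Complex.norm_real,
        Real.norm_of_nonneg (hc k).le]
  have hterm := fun k => hI'.comp_clm hU hv (T k) (hh k)
  have hgeom : ∀ k, I.nrm E U v F.linftySeq (fun x => T k (h k x)) ≤ (1 / 2) ^ k := fun k =>
    calc _ ≤ ‖T k‖ * I.nrm E U v F (h k) := (hterm k).2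
      _ ≤ c k * I.nrm E U v F (h k) := by gcongr; exacts [hnrm k, hT k]
      _ ≤ (1 / 2) ^ k := by
        rw [div_mul_eq_mul_div, div_le_iff₀ (by linarith [hnrm k])]
        nlinarith [hnrm k, pow_pos (by norm_num : (0 : ℝ) < 1 / 2) k]
  obtain ⟨g, hg, hgsum⟩ := hI.exists_hasSum hU hv (fun k => (hterm k).1) <|
    Summable.of_nonneg_of_le (fun k => hI'.nrm_nonneg E U v hU hv _ _ (hterm k).1) hgeom
      summable_geometric_two
  refine ⟨c, g, hc, hg, fun x hx k => ?_⟩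
  have hk := (lp.evalCLM ℂ (fun _ : ℕ => F.α) ∞ k).hasSum (hgsum x hx)
  refine (hk.unique (hasSum_single k fun j hj => ?_)).trans ?_
  · change (c j : ℂ) • Pi.single (M := fun _ : ℕ => F.α) j (h j x) k = 0
    rw [Pi.single_eq_of_ne hj.symm, smul_zero]
  · change (c k : ℂ) • Pi.single (M := fun _ : ℕ => F.α) k (h k x) k = _
    rw [Pi.single_eq_same]

theorem exists_ehrlingDominates_of_mem_whClosure {f : E → F}
    (hf : (whClosure I).mem E U v F f) :
    ∃ (G : BanachSp.{u}) (g : E → G) (N : ℝ → ℝ), I.mem E U v G g ∧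
      (∀ ε : ℝ, 0 < ε → 0 < N ε) ∧ EhrlingDominates U v f g N := by
  obtain ⟨-, happ⟩ := hf
  choose h hh happrox using fun k : ℕ => happ (1 / (k + 1)) (by positivity)
  obtain ⟨c, g, hc, hg, hgk⟩ := hI.exists_mem_linftySeq_smul_eq hU hv hh
  refine ⟨F.linftySeq, g, fun ε => (c ⌈ε⁻¹⌉₊)⁻¹, hg, fun ε _ => inv_pos.2 (hc _), ?_⟩
  intro n lam x hx ε hε
  set K := ⌈ε⁻¹⌉₊
  have hK : 1 / ((K : ℝ) + 1) ≤ ε := by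
    rw [div_le_iff₀ (by positivity)]
    have := (inv_le_iff_one_le_mul₀ hε).1 (Nat.le_ceil ε⁻¹)
    nlinarith
  have hcoord :
      ‖∑ i, lam i • v (x i) • h K (x i)‖ ≤ (c K)⁻¹ * ‖∑ i, lam i • v (x i) • g (x i)‖ := by
    have heval : lp.evalCLM ℂ (fun _ : ℕ => F.α) ∞ K (∑ i, lam i • v (x i) • g (x i)) =
        (c K : ℂ) • ∑ i, lam i • v (x i) • h K (x i) := by
      rw [map_sum, Finset.smul_sum]
      refine Finset.sum_congr rfl fun i _ => ?_
      change lam i • v (x i) • g (x i) K = _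
      rw [hgk _ (hx i), smul_comm (c K : ℂ), smul_comm (c K : ℂ) (v (x i))]
    rw [inv_mul_eq_div, le_div_iff₀ (hc K)]
    calc ‖∑ i, lam i • v (x i) • h K (x i)‖ * c K
        = ‖(c K : ℂ) • ∑ i, lam i • v (x i) • h K (x i)‖ := by
          rw [norm_smul, Complex.norm_real, Real.norm_of_nonneg (hc K).le, mul_comm]
      _ ≤ ‖∑ i, lam i • v (x i) • g (x i)‖ := by
          rw [← heval]; exact lp.norm_apply_le_norm ENNReal.top_ne_zero _ _
  calc ‖∑ i, lam i • v (x i) • f (x i)‖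
      ≤ ‖∑ i, lam i • v (x i) • h K (x i)‖ + ε * ∑ i, ‖lam i‖ :=
        norm_sum_smul_le_of_weighted_approx (fun y hy => (hv.2 y hy).le)
          (fun y hy => (happrox K y hy).trans hK) lam x hx
    _ ≤ (c K)⁻¹ * ‖∑ i, lam i • v (x i) • g (x i)‖ + ε * ∑ i, ‖lam i‖ := by gcongr

end IsBanachWHIdeal

/-- for a Banach weighted holomorphic ideal, the closed injective hull is
characterized by a single mapping `g` and a function `N : (0, ∞) → (0, ∞)`. -/
theorem closed_injective_hull_ehrling_banach (I : WHAssignment.{u})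
    (hI : IsBanachWHIdeal I)
    (E : BanachSp.{u}) (U : Set E.α) (v : E.α → ℝ) (hU : IsOpen U) (hv : IsWeight U v)
    (F : BanachSp.{u}) (f : E.α → F.α) (hf : HvBdd U v f) :
    (whInj (whClosure I)).mem E U v F f ↔
      ∃ (G : BanachSp.{u}) (g : E.α → G.α) (N : ℝ → ℝ), I.mem E U v G g ∧
        (∀ ε : ℝ, 0 < ε → 0 < N ε) ∧
        ∀ (n : ℕ) (lam : Fin n → ℂ) (x : Fin n → E.α), (∀ i, x i ∈ U) →
          ∀ ε : ℝ, 0 < ε →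
            ‖∑ i, lam i • v (x i) • f (x i)‖ ≤
              N ε * ‖∑ i, lam i • v (x i) • g (x i)‖ + ε * ∑ i, ‖lam i‖ := by
  constructor
  · rintro ⟨-, hιf⟩
    obtain ⟨G, g, N, hg, hN, hdom⟩ := hI.exists_ehrlingDominates_of_mem_whClosure hU hv hιf
    exact ⟨G, g, N, hg, hN, hdom.of_comp norm_iota⟩
  · rintro ⟨G, g, N, hg, hN, hdom⟩
    exact ⟨hf, hI.toIsNormedWHIdeal.iota_comp_mem_whClosure hU hv hf hg hN hdom⟩
end
end
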